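/- Let 0<p<∞, 0<q≤∞ and 0<η≤1. There is a constant C such that: if a martingale f=(f_n)∈ℳ admits a representation f_n = ∑_{k∈ℤ} λ_k 𝔼_n a^k (almost everywhere, for every n), where λ_k≥0 and each a^k is a (p,∞)^*-atom associated to a stopping time ν^k, then f∈𝒫_{p,q} and ‖f‖_{𝒫_{p,q}} ≤ C‖∑_{k∈ℤ}(λ_k/ℙ(B_{ν^k})^{1/p})^η 1_{B_{ν^k}}‖_{p/η,q/η}^{1/η}. -/

import Mathlib

open MeasureTheory Filter
open scoped ENNReal ENat

noncomputable section

variable {Ω : Type*} {m0 : MeasurableSpace Ω}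

/-- The Wiener amalgam quasi-norm `‖g‖_{p,q}` of an `ℝ≥0∞`-valued function `g`, with respect to
the partition `(Os j)_{j ∈ ℤ}` of `Ω`: for finite `q` it is
`(∑ j (∫_{Os j} g^p dμ)^{q/p})^{1/q}`, and for `q = ∞` it is `sup_j (∫_{Os j} g^p dμ)^{1/p}`. -/
def amalgamNorm (μ : Measure Ω) (Os : ℤ → Set Ω) (p : ℝ) (q : ℝ≥0∞) (g : Ω → ℝ≥0∞) : ℝ≥0∞ :=
  if q = ∞ then ⨆ j : ℤ, (∫⁻ ω in Os j, g ω ^ p ∂μ) ^ (1 / p)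
  else (∑' j : ℤ, (∫⁻ ω in Os j, g ω ^ p ∂μ) ^ (q.toReal / p)) ^ (1 / q.toReal)

/-- The amalgam quasi-norm of a real-valued function. -/
def amalgamNormR (μ : Measure Ω) (Os : ℤ → Set Ω) (p : ℝ) (q : ℝ≥0∞) (f : Ω → ℝ) : ℝ≥0∞ :=
  amalgamNorm μ Os p q fun ω => ENNReal.ofReal |f ω|

/-- The `L_r` norm (`0 < r ≤ ∞`) of an `ℝ≥0∞`-valued function. -/
def lrNorm (μ : Measure Ω) (r : ℝ≥0∞) (g : Ω → ℝ≥0∞) : ℝ≥0∞ :=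
  if r = ∞ then essSup g μ else (∫⁻ ω, g ω ^ r.toReal ∂μ) ^ (1 / r.toReal)

/-- The conditional square function `s(f) = (∑_n 𝔼_{n-1}|d_n f|²)^{1/2}` of the
process `f = (f_n)` (differences `d_{n+1} f = f_{n+1} - f_n`). -/
def condSq (ℱ : Filtration ℕ m0) (μ : Measure Ω) (f : ℕ → Ω → ℝ) : Ω → ℝ≥0∞ :=
  fun ω => (∑' n : ℕ, ENNReal.ofReal ((μ[(fun x => (f (n + 1) x - f n x) ^ 2)|ℱ n]) ω)) ^ (2⁻¹ : ℝ)

/-- The truncated conditional square function `s_n(f) = (∑_{i=1}^n 𝔼_{i-1}|d_i f|²)^{1/2}`. -/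
def condSqFin (ℱ : Filtration ℕ m0) (μ : Measure Ω) (f : ℕ → Ω → ℝ) (n : ℕ) : Ω → ℝ≥0∞ :=
  fun ω =>
    (∑ i ∈ Finset.range n, ENNReal.ofReal ((μ[(fun x => (f (i + 1) x - f i x) ^ 2)|ℱ i]) ω)) ^
      (2⁻¹ : ℝ)

/-- The square function `S(f) = (∑_n |d_n f|²)^{1/2}`. -/
def sqFn (f : ℕ → Ω → ℝ) : Ω → ℝ≥0∞ :=
  fun ω => (∑' n : ℕ, ENNReal.ofReal ((f (n + 1) ω - f n ω) ^ 2)) ^ (2⁻¹ : ℝ)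

/-- The truncated square function `S_n(f) = (∑_{i=1}^n |d_i f|²)^{1/2}` (real-valued). -/
def sqFnFin (f : ℕ → Ω → ℝ) (n : ℕ) : Ω → ℝ :=
  fun ω => Real.sqrt (∑ i ∈ Finset.range n, (f (i + 1) ω - f i ω) ^ 2)

/-- The maximal function `f* = sup_n |f_n|`. -/
def maxFn (f : ℕ → Ω → ℝ) : Ω → ℝ≥0∞ := fun ω => ⨆ n : ℕ, ENNReal.ofReal |f n ω|

/-- A stopping time with values in `ℕ ∪ {∞}` for the filtration `ℱ`. -/
def IsStoppingTimeE (ℱ : Filtration ℕ m0) (ν : Ω → ℕ∞) : Prop :=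
  ∀ n : ℕ, MeasurableSet[ℱ n] {ω | ν ω ≤ (n : ℕ∞)}

/-- `B_ν = {ν ≠ ∞}`. -/
def Bset (ν : Ω → ℕ∞) : Set Ω := {ω | ν ω ≠ ⊤}

/-- The `H^s_{p,q}` quasi-norm `‖s(f)‖_{p,q}` of a process `f`. -/
def HsNorm (ℱ : Filtration ℕ m0) (μ : Measure Ω) (Os : ℤ → Set Ω) (p : ℝ) (q : ℝ≥0∞)
    (f : ℕ → Ω → ℝ) : ℝ≥0∞ :=
  amalgamNorm μ Os p q (condSq ℱ μ f)

/-- Membership in the class `Γ` of adapted, nondecreasing, nonnegative sequences. -/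
def MemGamma (ℱ : Filtration ℕ m0) (β : ℕ → Ω → ℝ) : Prop :=
  Adapted ℱ β ∧ (∀ ω, Monotone fun n => β n ω) ∧ ∀ (n : ℕ) (ω : Ω), 0 ≤ β n ω

/-- `β_∞ = lim_n β_n (= sup_n β_n)` for a nondecreasing nonnegative sequence `β`. -/
def betaInfty (β : ℕ → Ω → ℝ) : Ω → ℝ≥0∞ := fun ω => ⨆ n, ENNReal.ofReal (β n ω)

/-- The `𝒬_{p,q}` quasi-norm: the infimum of `‖β_∞‖_{p,q}` over all `β ∈ Γ`
with `S_{n}(f) ≤ β_{n-1}`. -/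
def QNorm (ℱ : Filtration ℕ m0) (μ : Measure Ω) (Os : ℤ → Set Ω) (p : ℝ) (q : ℝ≥0∞)
    (f : ℕ → Ω → ℝ) : ℝ≥0∞ :=
  ⨅ (β : ℕ → Ω → ℝ) (_ : MemGamma ℱ β ∧ ∀ n : ℕ, ∀ᵐ ω ∂μ, sqFnFin f (n + 1) ω ≤ β n ω),
    amalgamNorm μ Os p q (betaInfty β)

/-- The `𝒫_{p,q}` quasi-norm: the infimum of `‖β_∞‖_{p,q}` over all `β ∈ Γ`
with `|f_n| ≤ β_{n-1}`. -/
def PNorm (ℱ : Filtration ℕ m0) (μ : Measure Ω) (Os : ℤ → Set Ω) (p : ℝ) (q : ℝ≥0∞)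
    (f : ℕ → Ω → ℝ) : ℝ≥0∞ :=
  ⨅ (β : ℕ → Ω → ℝ) (_ : MemGamma ℱ β ∧ ∀ n : ℕ, ∀ᵐ ω ∂μ, |f (n + 1) ω| ≤ β n ω),
    amalgamNorm μ Os p q (betaInfty β)

/-- A `(p,r)^s`-atom `a` associated to the stopping time `ν`. -/
structure IsAtomS (ℱ : Filtration ℕ m0) (μ : Measure Ω) (p : ℝ) (r : ℝ≥0∞)
    (a : Ω → ℝ) (ν : Ω → ℕ∞) : Prop where
  stopping : IsStoppingTimeE ℱ ν
  integrable : Integrable a μ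
  vanish : ∀ n : ℕ, ∀ᵐ ω ∂μ, (n : ℕ∞) ≤ ν ω → (μ[a|ℱ n]) ω = 0
  size : lrNorm μ r (condSq ℱ μ fun n => μ[a|ℱ n]) ≤ μ (Bset ν) ^ (1 / r.toReal - 1 / p)

/-- A `(p,q,r)^s`-atom `a` associated to the stopping time `ν`. -/
structure IsAtomS' (ℱ : Filtration ℕ m0) (μ : Measure Ω) (Os : ℤ → Set Ω) (p : ℝ) (q r : ℝ≥0∞)
    (a : Ω → ℝ) (ν : Ω → ℕ∞) : Prop where
  stopping : IsStoppingTimeE ℱ ν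
  integrable : Integrable a μ
  vanish : ∀ n : ℕ, ∀ᵐ ω ∂μ, (n : ℕ∞) ≤ ν ω → (μ[a|ℱ n]) ω = 0
  size : lrNorm μ r (condSq ℱ μ fun n => μ[a|ℱ n]) ≤
    μ (Bset ν) ^ (1 / r.toReal) * (amalgamNorm μ Os p q ((Bset ν).indicator 1))⁻¹

/-- A `(p,∞)^S`-atom `a` associated to the stopping time `ν`. -/
structure IsAtomBigS (ℱ : Filtration ℕ m0) (μ : Measure Ω) (p : ℝ)
    (a : Ω → ℝ) (ν : Ω → ℕ∞) : Prop where
  stopping : IsStoppingTimeE ℱ ν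
  integrable : Integrable a μ
  vanish : ∀ n : ℕ, ∀ᵐ ω ∂μ, (n : ℕ∞) ≤ ν ω → (μ[a|ℱ n]) ω = 0
  size : essSup (sqFn fun n => μ[a|ℱ n]) μ ≤ μ (Bset ν) ^ (-(1 / p))

/-- A `(p,q,∞)^S`-atom `a` associated to the stopping time `ν`. -/
structure IsAtomBigS' (ℱ : Filtration ℕ m0) (μ : Measure Ω) (Os : ℤ → Set Ω) (p : ℝ) (q : ℝ≥0∞)
    (a : Ω → ℝ) (ν : Ω → ℕ∞) : Prop where
  stopping : IsStoppingTimeE ℱ ν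
  integrable : Integrable a μ
  vanish : ∀ n : ℕ, ∀ᵐ ω ∂μ, (n : ℕ∞) ≤ ν ω → (μ[a|ℱ n]) ω = 0
  size : essSup (sqFn fun n => μ[a|ℱ n]) μ ≤ (amalgamNorm μ Os p q ((Bset ν).indicator 1))⁻¹

/-- A `(p,∞)^*`-atom `a` associated to the stopping time `ν`. -/
structure IsAtomStar (ℱ : Filtration ℕ m0) (μ : Measure Ω) (p : ℝ)
    (a : Ω → ℝ) (ν : Ω → ℕ∞) : Prop where
  stopping : IsStoppingTimeE ℱ ν
  integrable : Integrable a μ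
  vanish : ∀ n : ℕ, ∀ᵐ ω ∂μ, (n : ℕ∞) ≤ ν ω → (μ[a|ℱ n]) ω = 0
  size : essSup (maxFn fun n => μ[a|ℱ n]) μ ≤ μ (Bset ν) ^ (-(1 / p))

/-- A `(p,q,∞)^*`-atom `a` associated to the stopping time `ν`. -/
structure IsAtomStar' (ℱ : Filtration ℕ m0) (μ : Measure Ω) (Os : ℤ → Set Ω) (p : ℝ) (q : ℝ≥0∞)
    (a : Ω → ℝ) (ν : Ω → ℕ∞) : Prop where
  stopping : IsStoppingTimeE ℱ ν
  integrable : Integrable a μ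
  vanish : ∀ n : ℕ, ∀ᵐ ω ∂μ, (n : ℕ∞) ≤ ν ω → (μ[a|ℱ n]) ω = 0
  size : essSup (maxFn fun n => μ[a|ℱ n]) μ ≤ (amalgamNorm μ Os p q ((Bset ν).indicator 1))⁻¹

/-- The stopped limit `f^ν`: equal to `𝔼_{ν(ω)} f (ω)` where `ν(ω) < ∞`, and to `f(ω)`
(the a.e. limit of the martingale `(𝔼_n f)`) where `ν(ω) = ∞`. -/
def fStopped (ℱ : Filtration ℕ m0) (μ : Measure Ω) (f : Ω → ℝ) (ν : Ω → ℕ∞) : Ω → ℝ :=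
  fun ω => if ν ω = ⊤ then f ω else (μ[f|ℱ (ν ω).toNat]) ω

/-- The Campanato norm `‖g‖_{ℒ_{2,φ}} = sup_ν φ(B_ν)⁻¹ (ℙ(B_ν)⁻¹ ∫_{B_ν} |g - g^ν|² dℙ)^{1/2}`,
where `φ(A) = ‖1_A‖_{p,q} / ℙ(A)` and the supremum runs over all stopping times `ν`
with `ℙ(B_ν) ≠ 0`. -/
def campanatoNorm (ℱ : Filtration ℕ m0) (μ : Measure Ω) (Os : ℤ → Set Ω) (p : ℝ) (q : ℝ≥0∞)
    (g : Ω → ℝ) : ℝ≥0∞ :=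
  ⨆ (ν : Ω → ℕ∞) (_ : IsStoppingTimeE ℱ ν ∧ μ (Bset ν) ≠ 0),
    (amalgamNorm μ Os p q ((Bset ν).indicator 1) / μ (Bset ν))⁻¹ *
      ((μ (Bset ν))⁻¹ *
        ∫⁻ ω in Bset ν, ENNReal.ofReal ((g ω - fStopped ℱ μ g ν ω) ^ 2) ∂μ) ^ (2⁻¹ : ℝ)

/-!
Since `𝔼_{n+1} a^k = 0` on `{ν_k ≥ n+1}` and `|𝔼_{n+1} a^k| ≤ ℙ(B_{ν_k})^{-1/p}`, the representation
gives the predictable bound `|f_{n+1}| ≤ g_n := ∑_k λ_k ℙ(B_{ν_k})^{-1/p} 1_{ν_k ≤ n}`. The running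
maximum of `g` is therefore an admissible `β ∈ Γ`, and
`β_∞ ≤ ∑_k λ_k ℙ(B_{ν_k})^{-1/p} 1_{B_{ν_k}} ≤ G^{1/η}` with
`G = ∑_k (λ_k ℙ(B_{ν_k})^{-1/p})^η 1_{B_{ν_k}}`, by the subadditivity of `t ↦ t^η`. The scaling
`‖G^{1/η}‖_{p,q} = ‖G‖_{p/η,q/η}^{1/η}` then gives the bound with `C = 1`. When `‖G‖_{p/η,q/η} < ∞`,
`G` is finite a.e., which is what lets `β` be real-valued.
-/

namespace ENNReal

theorem rpow_tsum_le_tsum_rpow {ι : Type*} (x : ι → ℝ≥0∞) {η : ℝ} (h0 : 0 < η) (h1 : η ≤ 1) :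
    (∑' k, x k) ^ η ≤ ∑' k, x k ^ η := by
  have hmap := (orderIsoRpow η h0).map_iSup fun s : Finset ι => ∑ k ∈ s, x k
  simp only [orderIsoRpow_apply] at hmap
  rw [ENNReal.tsum_eq_iSup_sum, hmap]
  refine iSup_le fun s => le_trans ?_ (ENNReal.sum_le_tsum s)
  exact Finset.le_sum_of_subadditive (· ^ η) (by simp [zero_rpow_of_pos h0])
    (fun a b => rpow_add_le_add_rpow a b h0.le h1) s x

theorem tsum_le_rpow_tsum_rpow {ι : Type*} (x : ι → ℝ≥0∞) {η : ℝ} (h0 : 0 < η)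
    (h1 : η ≤ 1) : ∑' k, x k ≤ (∑' k, x k ^ η) ^ (1 / η) := by
  calc ∑' k, x k = ((∑' k, x k) ^ η) ^ (1 / η) := by
        rw [← ENNReal.rpow_mul, mul_one_div_cancel h0.ne', ENNReal.rpow_one]
    _ ≤ (∑' k, x k ^ η) ^ (1 / η) :=
        ENNReal.rpow_le_rpow (rpow_tsum_le_tsum_rpow x h0 h1) (by positivity)

end ENNReal

section Amalgam

variable (μ : Measure Ω) (Os : ℤ → Set Ω)

theorem amalgamNorm_mono {p : ℝ} (hp : 0 ≤ p) (q : ℝ≥0∞) {g g' : Ω → ℝ≥0∞} (h : g ≤ g') :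
    amalgamNorm μ Os p q g ≤ amalgamNorm μ Os p q g' := by
  have hI : ∀ j, ∫⁻ ω in Os j, g ω ^ p ∂μ ≤ ∫⁻ ω in Os j, g' ω ^ p ∂μ :=
    fun j => lintegral_mono fun ω => ENNReal.rpow_le_rpow (h ω) hp
  unfold amalgamNorm
  split
  · exact iSup_mono fun j => ENNReal.rpow_le_rpow (hI j) (by positivity)
  · exact ENNReal.rpow_le_rpow
      (ENNReal.tsum_le_tsum fun j => ENNReal.rpow_le_rpow (hI j) (by positivity)) (by positivity)

theorem amalgamNorm_rpow_one_div (p : ℝ) {η : ℝ} (hη : 0 < η) (q : ℝ≥0∞) (G : Ω → ℝ≥0∞) :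
    amalgamNorm μ Os p q (fun ω => G ω ^ (1 / η)) =
      amalgamNorm μ Os (p / η) (q / ENNReal.ofReal η) G ^ (1 / η) := by
  have hint : ∀ j, ∫⁻ ω in Os j, (G ω ^ (1 / η)) ^ p ∂μ = ∫⁻ ω in Os j, G ω ^ (p / η) ∂μ :=
    fun j => lintegral_congr fun ω => by rw [← ENNReal.rpow_mul, one_div_mul_eq_div]
  unfold amalgamNorm
  simp_rw [hint]
  by_cases hq : q = ∞
  · have hmap := (ENNReal.orderIsoRpow (1 / η) (by positivity)).map_iSup
      fun j : ℤ => (∫⁻ ω in Os j, G ω ^ (p / η) ∂μ) ^ (1 / (p / η))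
    simp only [ENNReal.orderIsoRpow_apply] at hmap
    rw [if_pos hq, if_pos (by rw [hq]; exact ENNReal.top_div_of_ne_top ENNReal.ofReal_ne_top), hmap]
    congr! 2 with j
    rw [← ENNReal.rpow_mul]
    congr 1
    field_simp
  · have hqη : q / ENNReal.ofReal η ≠ ∞ := ENNReal.div_ne_top hq (by simpa using hη)
    rw [if_neg hq, if_neg hqη, ENNReal.toReal_div, ENNReal.toReal_ofReal hη.le,
      ← ENNReal.rpow_mul]
    congr 1
    · congr! 2 with j
      field_simp
    · field_simp

variable {μ Os}

theorem lintegral_rpow_ne_top_of_amalgamNorm_ne_top {p : ℝ} (hp : 0 < p) {q : ℝ≥0∞}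
    (hq : q ≠ 0) {G : Ω → ℝ≥0∞} (h : amalgamNorm μ Os p q G ≠ ∞) (j : ℤ) :
    ∫⁻ ω in Os j, G ω ^ p ∂μ ≠ ∞ := by
  intro htop
  unfold amalgamNorm at h
  split_ifs at h with hq'
  · refine h (top_le_iff.mp ?_)
    calc ∞ = (∫⁻ ω in Os j, G ω ^ p ∂μ) ^ (1 / p) := by
          rw [htop, ENNReal.top_rpow_of_pos (by positivity)]
      _ ≤ ⨆ j, (∫⁻ ω in Os j, G ω ^ p ∂μ) ^ (1 / p) := le_iSup_of_le j le_rfl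
  · have hq_pos : 0 < q.toReal := ENNReal.toReal_pos hq hq'
    refine h (top_le_iff.mp ?_)
    calc ∞ = ((∫⁻ ω in Os j, G ω ^ p ∂μ) ^ (q.toReal / p)) ^ (1 / q.toReal) := by
          rw [htop, ENNReal.top_rpow_of_pos (by positivity), ENNReal.top_rpow_of_pos (by positivity)]
      _ ≤ _ := ENNReal.rpow_le_rpow (ENNReal.le_tsum j) (by positivity)

theorem ae_ne_top_of_amalgamNorm_ne_top (hOcov : ⋃ j, Os j = Set.univ) {p : ℝ} (hp : 0 < p)
    {q : ℝ≥0∞} (hq : q ≠ 0) {G : Ω → ℝ≥0∞} (hG : Measurable G)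
    (h : amalgamNorm μ Os p q G ≠ ∞) : ∀ᵐ ω ∂μ, G ω ≠ ∞ := by
  have hlocal : ∀ j, μ ({ω | G ω = ∞} ∩ Os j) = 0 := by
    intro j
    have hfin : ∀ᵐ ω ∂μ.restrict (Os j), G ω ^ p < ∞ :=
      ae_lt_top (hG.pow_const p) (lintegral_rpow_ne_top_of_amalgamNorm_ne_top hp hq h j)
    rw [← Measure.restrict_apply (measurableSet_eq_fun hG measurable_const)]
    refine measure_mono_null (fun ω hω => ?_) (ae_iff.mp hfin)
    simp [Set.mem_ofPred_eq.mp hω, hp]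
  have hcover : {ω | G ω = ∞} = ⋃ j, {ω | G ω = ∞} ∩ Os j := by
    rw [← Set.inter_iUnion, hOcov, Set.inter_univ]
  simp only [ae_iff, not_not]
  rw [hcover]
  exact measure_iUnion_null hlocal

end Amalgam

section Atoms

variable {ℱ : Filtration ℕ m0} {μ : Measure Ω}

theorem IsStoppingTimeE.measurableSet_Bset {ν : Ω → ℕ∞} (hν : IsStoppingTimeE ℱ ν) :
    MeasurableSet (Bset ν) := by
  have hB : Bset ν = ⋃ n : ℕ, {ω | ν ω ≤ n} := by
    ext ω
    simp only [Bset, Set.mem_ofPred_eq, Set.mem_iUnion, ENat.ne_top_iff_exists]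
    exact ⟨fun ⟨n, hn⟩ => ⟨n, hn.ge⟩, fun ⟨n, hn⟩ =>
      ⟨(ν ω).toNat, ENat.natCast_toNat (ne_top_of_le_ne_top (ENat.natCast_ne_top n) hn)⟩⟩
  rw [hB]
  exact MeasurableSet.iUnion fun n => ℱ.le n _ (hν n)

theorem IsAtomStar.ae_ofReal_abs_condExp_succ_le {p : ℝ} {a : Ω → ℝ} {ν : Ω → ℕ∞}
    (ha : IsAtomStar ℱ μ p a ν) (n : ℕ) :
    ∀ᵐ ω ∂μ, ENNReal.ofReal |μ[a|ℱ (n + 1)] ω| ≤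
      {ω | ν ω ≤ n}.indicator (fun _ => (μ (Bset ν) ^ (1 / p))⁻¹) ω := by
  filter_upwards [ha.vanish (n + 1), ENNReal.ae_le_essSup (maxFn fun m => μ[a|ℱ m])]
    with ω hvanish hmax
  by_cases hν : ν ω ≤ n
  · rw [Set.indicator_of_mem (show ω ∈ {ω | ν ω ≤ n} from hν), ← ENNReal.rpow_neg]
    exact (le_iSup (fun m => ENNReal.ofReal |μ[a|ℱ m] ω|) (n + 1)).trans (hmax.trans ha.size)
  · have hlt : ((n + 1 : ℕ) : ℕ∞) ≤ ν ω := by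
      rw [Nat.cast_succ, ENat.add_one_le_iff (ENat.natCast_ne_top n)]
      exact lt_of_not_ge hν
    simp [hvanish hlt]

theorem measurable_tsum_indicator_le_of_isStoppingTimeE {ν : ℤ → Ω → ℕ∞}
    (hν : ∀ k, IsStoppingTimeE ℱ (ν k)) (c : ℤ → ℝ≥0∞) (n : ℕ) :
    Measurable[ℱ n] fun ω => ∑' k, {ω | ν k ω ≤ n}.indicator (fun _ => c k) ω := by
  let _ := ℱ n
  exact Measurable.tsum fun k => measurable_const.indicator (hν k n)

theorem ae_ofReal_abs_le_tsum_indicator_of_atomic {p : ℝ} {F : Ω → ℝ} {l : ℤ → ℝ}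
    {a : ℤ → Ω → ℝ} {ν : ℤ → Ω → ℕ∞} (hl : ∀ k, 0 ≤ l k)
    (hatom : ∀ k, IsAtomStar ℱ μ p (a k) (ν k)) (n : ℕ)
    (hF : ∀ᵐ ω ∂μ, F ω = ∑' k, l k * μ[a k|ℱ (n + 1)] ω) :
    ∀ᵐ ω ∂μ, ENNReal.ofReal |F ω| ≤ ∑' k, {ω | ν k ω ≤ n}.indicator
      (fun _ => ENNReal.ofReal (l k) / μ (Bset (ν k)) ^ (1 / p)) ω := by
  filter_upwards [hF, ae_all_iff.mpr fun k => (hatom k).ae_ofReal_abs_condExp_succ_le n]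
    with ω hFω hatomω
  rw [hFω, ← Real.enorm_eq_ofReal_abs]
  refine enorm_tsum_le_tsum_enorm.trans (ENNReal.tsum_le_tsum fun k => ?_)
  rw [Real.enorm_eq_ofReal_abs, abs_mul, abs_of_nonneg (hl k), ENNReal.ofReal_mul (hl k)]
  refine (mul_le_mul_right (hatomω k) _).trans (le_of_eq ?_)
  by_cases hν : ν k ω ≤ n <;> simp [hν, div_eq_mul_inv]

end Atoms

section Gamma

variable {ℱ : Filtration ℕ m0}

/-- `toReal` sends `∞` to `0`; taking the running maximum restores monotonicity in `n`. -/
def runningMaxToReal (g : ℕ → Ω → ℝ≥0∞) (n : ℕ) (ω : Ω) : ℝ :=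
  (Finset.range (n + 1)).sup' Finset.nonempty_range_add_one fun m => (g m ω).toReal

theorem toReal_le_runningMaxToReal (g : ℕ → Ω → ℝ≥0∞) (n : ℕ) (ω : Ω) :
    (g n ω).toReal ≤ runningMaxToReal g n ω :=
  Finset.le_sup' (fun m => (g m ω).toReal) (Finset.self_mem_range_succ n)

theorem memGamma_runningMaxToReal {g : ℕ → Ω → ℝ≥0∞} (hg : ∀ n, Measurable[ℱ n] (g n)) :
    MemGamma ℱ (runningMaxToReal g) := by
  refine ⟨fun n => ?_, fun ω n n' hnn' => ?_, fun n ω => ?_⟩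
  · exact @Finset.measurable_range_sup'' _ _ _ (ℱ n) _ _ _ _ fun m hm =>
      ((hg m).mono (ℱ.mono hm) le_rfl).ennreal_toReal
  · exact Finset.sup'_mono _ (Finset.range_subset_range.mpr (by omega)) _
  · exact ENNReal.toReal_nonneg.trans (toReal_le_runningMaxToReal g n ω)

theorem betaInfty_runningMaxToReal_le {g : ℕ → Ω → ℝ≥0∞} {H : Ω → ℝ≥0∞}
    (hgH : ∀ n, g n ≤ H) : betaInfty (runningMaxToReal g) ≤ H := by
  intro ω
  by_cases hH : H ω = ∞
  · exact hH ▸ le_top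
  refine iSup_le fun n => ENNReal.ofReal_le_of_le_toReal (Finset.sup'_le _ _ fun m _ => ?_)
  exact ENNReal.toReal_mono hH (hgH m ω)

theorem PNorm_le_amalgamNorm_of_predictable_bound {μ : Measure Ω} {Os : ℤ → Set Ω} {p : ℝ}
    (hp : 0 ≤ p) (q : ℝ≥0∞) {f : ℕ → Ω → ℝ} {g : ℕ → Ω → ℝ≥0∞} {H : Ω → ℝ≥0∞}
    (hg : ∀ n, Measurable[ℱ n] (g n))
    (hfg : ∀ n, ∀ᵐ ω ∂μ, ENNReal.ofReal |f (n + 1) ω| ≤ g n ω)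
    (hgH : ∀ n, g n ≤ H) (hH : ∀ᵐ ω ∂μ, H ω ≠ ∞) :
    PNorm ℱ μ Os p q f ≤ amalgamNorm μ Os p q H := by
  have hbound : ∀ n, ∀ᵐ ω ∂μ, |f (n + 1) ω| ≤ runningMaxToReal g n ω := fun n => by
    filter_upwards [hfg n, hH] with ω hfω hHω
    refine le_trans ?_ (toReal_le_runningMaxToReal g n ω)
    exact (ENNReal.ofReal_le_iff_le_toReal (ne_top_of_le_ne_top hHω (hgH n ω))).mp hfω
  exact iInf₂_le_of_le _ ⟨memGamma_runningMaxToReal hg, hbound⟩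
    (amalgamNorm_mono μ Os hp q (betaInfty_runningMaxToReal_le hgH))

end Gamma

theorem PNorm_le_rpow_amalgamNorm_of_atomic {ℱ : Filtration ℕ m0} {μ : Measure Ω}
    {Os : ℤ → Set Ω} (hOcov : ⋃ j, Os j = Set.univ) {p : ℝ} (hp : 0 < p) {q : ℝ≥0∞}
    (hq : q ≠ 0) {η : ℝ} (hη0 : 0 < η) (hη1 : η ≤ 1) {f : ℕ → Ω → ℝ} {l : ℤ → ℝ}
    {a : ℤ → Ω → ℝ} {ν : ℤ → Ω → ℕ∞} (hl : ∀ k, 0 ≤ l k)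
    (hatom : ∀ k, IsAtomStar ℱ μ p (a k) (ν k))
    (hrep : ∀ n : ℕ, ∀ᵐ ω ∂μ, f n ω = ∑' k, l k * μ[a k|ℱ n] ω) :
    PNorm ℱ μ Os p q f ≤ amalgamNorm μ Os (p / η) (q / ENNReal.ofReal η)
      (fun ω => ∑' k, (Bset (ν k)).indicator
        (fun _ => (ENNReal.ofReal (l k) / μ (Bset (ν k)) ^ (1 / p)) ^ η) ω) ^ (1 / η) := by
  set c : ℤ → ℝ≥0∞ := fun k => ENNReal.ofReal (l k) / μ (Bset (ν k)) ^ (1 / p)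
  set G : Ω → ℝ≥0∞ := fun ω => ∑' k, (Bset (ν k)).indicator (fun _ => c k ^ η) ω
  by_cases hGtop : amalgamNorm μ Os (p / η) (q / ENNReal.ofReal η) G = ∞
  · rw [hGtop, ENNReal.top_rpow_of_pos (by positivity)]
    exact le_top
  set H : Ω → ℝ≥0∞ := fun ω => ∑' k, (Bset (ν k)).indicator (fun _ => c k) ω
  set g : ℕ → Ω → ℝ≥0∞ := fun n ω => ∑' k, {ω | ν k ω ≤ n}.indicator (fun _ => c k) ω
  have hgH : ∀ n, g n ≤ H := fun n ω => ENNReal.tsum_le_tsum fun k =>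
    Set.indicator_le_indicator_of_subset
      (fun ω' hω' => ne_top_of_le_ne_top (ENat.natCast_ne_top n) hω') (fun _ => zero_le) ω
  have hHG : H ≤ fun ω => G ω ^ (1 / η) := fun ω => by
    refine (ENNReal.tsum_le_rpow_tsum_rpow _ hη0 hη1).trans_eq ?_
    congr 2 with k
    by_cases hω : ω ∈ Bset (ν k) <;> simp [hω, ENNReal.zero_rpow_of_pos hη0]
  have hG : ∀ᵐ ω ∂μ, G ω ≠ ∞ :=
    ae_ne_top_of_amalgamNorm_ne_top hOcov (div_pos hp hη0) (by simpa using hq)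
      (Measurable.tsum fun k =>
        measurable_const.indicator (hatom k).stopping.measurableSet_Bset) hGtop
  have hH : ∀ᵐ ω ∂μ, H ω ≠ ∞ := by
    filter_upwards [hG] with ω hω
    exact ne_top_of_le_ne_top (ENNReal.rpow_ne_top_of_nonneg (by positivity) hω) (hHG ω)
  calc PNorm ℱ μ Os p q f ≤ amalgamNorm μ Os p q H :=
        PNorm_le_amalgamNorm_of_predictable_bound hp.le q
          (measurable_tsum_indicator_le_of_isStoppingTimeE (fun k => (hatom k).stopping) c)
          (fun n => ae_ofReal_abs_le_tsum_indicator_of_atomic hl hatom n (hrep (n + 1))) hgH hH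
    _ ≤ amalgamNorm μ Os p q fun ω => G ω ^ (1 / η) := amalgamNorm_mono μ Os hp.le q hHG
    _ = _ := amalgamNorm_rpow_one_div μ Os p hη0 q G

theorem stmt7_general
    (μ : Measure Ω) (ℱ : Filtration ℕ m0)
    (Os : ℤ → Set Ω) (hOcov : (⋃ j, Os j) = Set.univ)
    (p : ℝ) (q : ℝ≥0∞) (hp : 0 < p) (hq : 0 < q) (η : ℝ) (hη0 : 0 < η) (hη1 : η ≤ 1) :
    ∃ C : ℝ≥0∞, C ≠ ∞ ∧
      ∀ (f : ℕ → Ω → ℝ) (l : ℤ → ℝ) (a : ℤ → Ω → ℝ) (ν : ℤ → Ω → ℕ∞),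
        Martingale f ℱ μ → f 0 = 0 → (∀ k, 0 ≤ l k) →
        (∀ k, IsAtomStar ℱ μ p (a k) (ν k)) →
        (∀ n : ℕ, ∀ᵐ ω ∂μ, f n ω = ∑' k : ℤ, l k * (μ[a k|ℱ n]) ω) →
        (amalgamNorm μ Os (p / η) (q / ENNReal.ofReal η)
            (fun ω => ∑' k : ℤ, (Bset (ν k)).indicator
              (fun _ => (ENNReal.ofReal (l k) / μ (Bset (ν k)) ^ (1 / p)) ^ η) ω) < ∞ → PNorm ℱ μ Os p q f < ∞) ∧
        PNorm ℱ μ Os p q f ≤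
          C * (amalgamNorm μ Os (p / η) (q / ENNReal.ofReal η)
            (fun ω => ∑' k : ℤ, (Bset (ν k)).indicator
              (fun _ => (ENNReal.ofReal (l k) / μ (Bset (ν k)) ^ (1 / p)) ^ η) ω)) ^ (1 / η) := by
  refine ⟨1, ENNReal.one_ne_top, fun f l a ν _ _ hl hatom hrep => ?_⟩
  have key := PNorm_le_rpow_amalgamNorm_of_atomic hOcov hp hq.ne' hη0 hη1 hl hatom hrep
  exact ⟨fun hfin => key.trans_lt (ENNReal.rpow_lt_top_of_nonneg (by positivity) hfin.ne),
    by rwa [one_mul]⟩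

theorem stmt7
    (μ : Measure Ω) [IsProbabilityMeasure μ] (ℱ : Filtration ℕ m0)
    (hsup : (⨆ n, (ℱ n : MeasurableSpace Ω)) = m0)
    (Os : ℤ → Set Ω) (hOmeas : ∀ j, MeasurableSet (Os j)) (hOne : ∀ j, (Os j).Nonempty)
    (hOdisj : Pairwise fun i j => Disjoint (Os i) (Os j)) (hOcov : (⋃ j, Os j) = Set.univ)
    (p : ℝ) (q : ℝ≥0∞) (hp : 0 < p) (hq : 0 < q) (η : ℝ) (hη0 : 0 < η) (hη1 : η ≤ 1) :
    ∃ C : ℝ≥0∞, C ≠ ∞ ∧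
      ∀ (f : ℕ → Ω → ℝ) (l : ℤ → ℝ) (a : ℤ → Ω → ℝ) (ν : ℤ → Ω → ℕ∞),
        Martingale f ℱ μ → f 0 = 0 → (∀ k, 0 ≤ l k) →
        (∀ k, IsAtomStar ℱ μ p (a k) (ν k)) →
        (∀ n : ℕ, ∀ᵐ ω ∂μ, f n ω = ∑' k : ℤ, l k * (μ[a k|ℱ n]) ω) →
        (amalgamNorm μ Os (p / η) (q / ENNReal.ofReal η)
            (fun ω => ∑' k : ℤ, (Bset (ν k)).indicator
              (fun _ => (ENNReal.ofReal (l k) / μ (Bset (ν k)) ^ (1 / p)) ^ η) ω) < ∞ → PNorm ℱ μ Os p q f < ∞) ∧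
        PNorm ℱ μ Os p q f ≤
          C * (amalgamNorm μ Os (p / η) (q / ENNReal.ofReal η)
            (fun ω => ∑' k : ℤ, (Bset (ν k)).indicator
              (fun _ => (ENNReal.ofReal (l k) / μ (Bset (ν k)) ^ (1 / p)) ^ η) ω)) ^ (1 / η) :=
  stmt7_general μ ℱ Os hOcov p q hp hq η hη0 hη1
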